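/- arXiv:1602.04947 — 6 statements merged into one kernel-verified Lean document; each statement's English description precedes it below -/
import Mathlib

section
/- Let p ∈ MvPolynomial (Fin 6) ℂ. Then p is fixed by the ℂ-algebra substitution X i ↦ ε i • X i for every even sign vector ε if and only if p belongs to the ℂ-subalgebra of MvPolynomial (Fin 6) ℂ generated by the squares X 0 ^ 2, …, X 5 ^ 2 together with the product X 0 * X 1 * X 2 * X 3 * X 4 * X 5. -/
open Finset MvPolynomial

lemma aux1 (ε : Fin 6 → ℂ) (d : Fin 6 →₀ ℕ) (c : ℂ) :
    aeval (fun i => ε i • X i) (monomial d c : MvPolynomial (Fin 6) ℂ)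
      = (∏ i, ε i ^ d i) • monomial d c := by
  rw [aeval_monomial]
  simp_rw [smul_pow, smul_eq_C_mul]
  rw [Finsupp.prod, Finset.prod_mul_distrib, ← map_prod]
  rw [show (∏ i ∈ d.support, X i ^ d i : MvPolynomial (Fin 6) ℂ) = monomial d 1 by
    rw [monomial_eq]; simp [Finsupp.prod]]
  rw [show ∏ i ∈ d.support, ε i ^ d i = ∏ i, ε i ^ d i from
    Finset.prod_subset (Finset.subset_univ _) (by intro x _ hx; simp [Finsupp.notMem_support_iff.mp hx])]
  rw [algebraMap_eq, mul_left_comm, C_mul_monomial, mul_one]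

lemma aux2 (ε : Fin 6 → ℂ) (p : MvPolynomial (Fin 6) ℂ) (d : Fin 6 →₀ ℕ) :
    coeff d (aeval (fun i => ε i • X i) p) = (∏ i, ε i ^ d i) * coeff d p := by
  conv_lhs => rw [p.as_sum, map_sum]
  rw [coeff_sum]
  simp_rw [aux1, coeff_smul, coeff_monomial, smul_eq_mul, mul_ite, mul_zero]
  rw [Finset.sum_ite_eq' p.support d fun d' => (∏ i, ε i ^ d' i) * coeff d' p]
  by_cases h : d ∈ p.support
  · simp [h]
  · simp [h, MvPolynomial.notMem_support_iff.mp h]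

lemma prod_eps (ε : Fin 6 → ℂ) (h1 : ∀ i, ε i ^ 2 = 1)
    (h2 : Even (Finset.univ.filter fun i => ε i = -1).card) : ∏ i, ε i = 1 := by
  have key : ∀ i, ε i = 1 ∨ ε i = -1 := fun i =>
    mul_self_eq_one_iff.mp (by rw [← sq]; exact h1 i)
  rw [← Finset.prod_filter_mul_prod_filter_not univ (fun i => ε i = -1)]
  rw [Finset.prod_congr rfl (fun i hi => (mem_filter.mp hi).2),
      Finset.prod_congr rfl (fun i hi => ((key i).resolve_right (mem_filter.mp hi).2)),
      Finset.prod_const, Finset.prod_const, one_pow, mul_one]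
  exact h2.neg_one_pow

lemma parity_lemma (p : MvPolynomial (Fin 6) ℂ)
    (hinv : ∀ ε : Fin 6 → ℂ, (∀ i, ε i ^ 2 = 1) →
        Even (Finset.univ.filter fun i => ε i = -1).card →
        aeval (fun i => ε i • (X i : MvPolynomial (Fin 6) ℂ)) p = p)
    (d : Fin 6 →₀ ℕ) (hd : d ∈ p.support) (i : Fin 6) : d i % 2 = d 0 % 2 := by
  by_contra hne
  have hi0 : i ≠ 0 := fun h => hne (by rw [h])
  set ε : Fin 6 → ℂ := fun k => if k = i ∨ k = 0 then -1 else 1 with hε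
  have h1 : ∀ k, ε k ^ 2 = 1 := by
    intro k; simp only [hε]; split_ifs <;> norm_num
  have hset : (Finset.univ.filter fun k => ε k = -1) = {i, 0} := by
    ext k
    simp only [mem_filter, mem_univ, true_and, mem_insert, mem_singleton, hε]
    split_ifs with h
    · simpa using h
    · simp only [show (1:ℂ) ≠ -1 by norm_num, false_iff]; exact h
  have h2 : Even (Finset.univ.filter fun k => ε k = -1).card := by
    rw [hset, Finset.card_insert_of_notMem (by simpa using hi0), Finset.card_singleton]
    exact even_two
  have heq := congrArg (coeff d) (hinv ε h1 h2)
  rw [aux2] at heq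
  have hprod : ∏ k, ε k ^ d k = (-1 : ℂ) ^ (d i + d 0) := by
    rw [← Finset.mul_prod_erase Finset.univ _ (Finset.mem_univ i),
        ← Finset.mul_prod_erase _ _ (Finset.mem_erase.mpr ⟨(Ne.symm hi0), Finset.mem_univ 0⟩)]
    rw [Finset.prod_eq_one (fun k hk => by
      have h' := by simpa [Finset.mem_erase] using hk
      simp [hε, h'.2, h'.1])]
    simp only [hε, if_pos (Or.inl rfl), if_pos (Or.inr rfl)]
    rw [mul_one, pow_add]
  have hodd : Odd (d i + d 0) := Nat.odd_iff.mpr (by omega)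
  rw [hprod, hodd.neg_one_pow, neg_one_mul] at heq
  exact (MvPolynomial.mem_support_iff.mp hd) (by linear_combination -heq / 2)

lemma mono_mem (d : Fin 6 →₀ ℕ) (c : ℂ) (h : ∀ i, d i % 2 = d 0 % 2) :
    (monomial d c : MvPolynomial (Fin 6) ℂ) ∈ Algebra.adjoin ℂ
        ((Set.range fun i : Fin 6 => (X i : MvPolynomial (Fin 6) ℂ) ^ 2) ∪
          {X 0 * X 1 * X 2 * X 3 * X 4 * X 5}) := by
  set A := Algebra.adjoin ℂ
        ((Set.range fun i : Fin 6 => (X i : MvPolynomial (Fin 6) ℂ) ^ 2) ∪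
          {X 0 * X 1 * X 2 * X 3 * X 4 * X 5}) with hA
  have hsq : ∀ (i : Fin 6) (k : ℕ), ((X i : MvPolynomial (Fin 6) ℂ) ^ 2) ^ k ∈ A :=
    fun i k => pow_mem (Algebra.subset_adjoin (Set.mem_union_left _ (Set.mem_range.mpr ⟨i, rfl⟩))) k
  have hm : (monomial d c : MvPolynomial (Fin 6) ℂ) = C c * ∏ i : Fin 6, X i ^ d i := by
    rw [monomial_eq]; congr 1
    exact Finsupp.prod_fintype _ _ fun i => pow_zero _
  rw [hm]
  refine mul_mem (by rw [← algebraMap_eq]; exact A.algebraMap_mem c) ?_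
  rcases Nat.even_or_odd (d 0) with he | ho
  · -- all even
    have : ∀ i : Fin 6, (X i : MvPolynomial (Fin 6) ℂ) ^ d i = (X i ^ 2) ^ (d i / 2) := by
      intro i
      rw [← pow_mul]
      congr 1
      have := h i
      have := Nat.even_iff.mp he
      omega
    simp_rw [this]
    exact prod_mem fun i _ => hsq i _
  · -- all odd
    have : ∀ i : Fin 6, (X i : MvPolynomial (Fin 6) ℂ) ^ d i = (X i ^ 2) ^ (d i / 2) * X i := by
      intro i
      rw [← pow_mul, ← pow_succ]
      congr 1
      have := h i
      have := Nat.odd_iff.mp ho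
      omega
    simp_rw [this]
    rw [Finset.prod_mul_distrib]
    refine mul_mem (prod_mem fun i _ => hsq i _) ?_
    rw [Fin.prod_univ_six]
    exact Algebra.subset_adjoin (Set.mem_union_right _ rfl)

theorem invariants_of_even_sign_changes (p : MvPolynomial (Fin 6) ℂ) :
    (∀ ε : Fin 6 → ℂ, (∀ i, ε i ^ 2 = 1) →
        Even (Finset.univ.filter fun i => ε i = -1).card →
        MvPolynomial.aeval (fun i => ε i • (MvPolynomial.X i : MvPolynomial (Fin 6) ℂ)) p = p) ↔
      p ∈ Algebra.adjoin ℂ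
        ((Set.range fun i : Fin 6 => (MvPolynomial.X i : MvPolynomial (Fin 6) ℂ) ^ 2) ∪
          {MvPolynomial.X 0 * MvPolynomial.X 1 * MvPolynomial.X 2 * MvPolynomial.X 3 *
            MvPolynomial.X 4 * MvPolynomial.X 5}) := by
  constructor
  · intro hinv
    rw [← p.support_sum_monomial_coeff]
    exact Subalgebra.sum_mem _ fun d hd => mono_mem d _ (parity_lemma p hinv d hd)
  · intro hp ε h1 h2
    have hle : Algebra.adjoin ℂ
        ((Set.range fun i : Fin 6 => (X i : MvPolynomial (Fin 6) ℂ) ^ 2) ∪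
          {X 0 * X 1 * X 2 * X 3 * X 4 * X 5}) ≤
        AlgHom.equalizer (aeval fun i => ε i • (X i : MvPolynomial (Fin 6) ℂ))
          (AlgHom.id ℂ _) := by
      rw [Algebra.adjoin_le_iff]
      rintro q (⟨i, rfl⟩ | rfl)
      · show aeval _ (X i ^ 2) = X i ^ 2
        rw [map_pow, aeval_X, smul_pow, h1 i, one_smul]
      · show aeval _ (X 0 * X 1 * X 2 * X 3 * X 4 * X 5 : MvPolynomial (Fin 6) ℂ) = _
        have hε : ε 0 * ε 1 * ε 2 * ε 3 * ε 4 * ε 5 = 1 := by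
          rw [← Fin.prod_univ_six ε]; exact prod_eps ε h1 h2
        simp only [map_mul, aeval_X, smul_eq_C_mul]
        rw [show (C (ε 0) * X 0) * (C (ε 1) * X 1) * (C (ε 2) * X 2) * (C (ε 3) * X 3) *
            (C (ε 4) * X 4) * (C (ε 5) * X 5)
            = C (ε 0 * ε 1 * ε 2 * ε 3 * ε 4 * ε 5) *
              (X 0 * X 1 * X 2 * X 3 * X 4 * X 5 : MvPolynomial (Fin 6) ℂ) by
          simp only [map_mul]; ring]
        rw [hε, map_one, one_mul]
        rfl
    exact hle hp
end

section
/- Let p ∈ MvPolynomial (Fin 6) ℂ. Then p is fixed by the ℂ-algebra substitution X i ↦ ε i • X i for every sign vector ε (even or odd) if and only if p belongs to the ℂ-subalgebra of MvPolynomial (Fin 6) ℂ generated by the squares X 0 ^ 2, …, X 5 ^ 2. -/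
open Finset MvPolynomial

lemma aeval_sign_monomial (ε : Fin 6 → ℂ) (m : Fin 6 →₀ ℕ) (c : ℂ) :
    aeval (fun i => ε i • (X i : MvPolynomial (Fin 6) ℂ)) (monomial m c)
      = (∏ i, ε i ^ m i) • monomial m c := by
  rw [aeval_monomial, monomial_eq]
  rw [← Finsupp.prod_fintype m (fun i k => ε i ^ k) (by simp)]
  rw [Finsupp.prod, Finsupp.prod, Finsupp.prod]
  rw [smul_eq_C_mul, map_prod]
  simp only [smul_pow, Algebra.smul_def, algebraMap_eq, Finset.prod_mul_distrib, map_prod, C_pow]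
  simp only [mul_pow, Finset.prod_mul_distrib]; ring

lemma coeff_aeval_sign (ε : Fin 6 → ℂ) (p : MvPolynomial (Fin 6) ℂ) (m : Fin 6 →₀ ℕ) :
    coeff m (aeval (fun i => ε i • (X i : MvPolynomial (Fin 6) ℂ)) p)
      = (∏ i, ε i ^ m i) * coeff m p := by
  induction p using MvPolynomial.induction_on' with
  | monomial m' c =>
    rw [aeval_sign_monomial, coeff_smul, coeff_monomial]
    split_ifs with h
    · subst h; rw [smul_eq_mul]
    · simp
  | add p q hp hq => rw [map_add, coeff_add, hp, hq, coeff_add, mul_add]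

theorem invariants_of_all_sign_changes (p : MvPolynomial (Fin 6) ℂ) :
    (∀ ε : Fin 6 → ℂ, (∀ i, ε i ^ 2 = 1) →
        MvPolynomial.aeval (fun i => ε i • (MvPolynomial.X i : MvPolynomial (Fin 6) ℂ)) p = p) ↔
      p ∈ Algebra.adjoin ℂ
        (Set.range fun i : Fin 6 => (MvPolynomial.X i : MvPolynomial (Fin 6) ℂ) ^ 2) := by
  constructor
  · intro h
    have heven : ∀ m ∈ p.support, ∀ j, Even (m j) := by
      intro m hm j
      by_contra hodd
      rw [Nat.not_even_iff_odd] at hodd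
      set ε : Fin 6 → ℂ := fun i => if i = j then -1 else 1 with hεdef
      have hε : ∀ i, ε i ^ 2 = 1 := by intro i; simp only [hεdef]; split_ifs <;> ring
      have := congrArg (coeff m) (h ε hε)
      rw [coeff_aeval_sign] at this
      have hprod : (∏ i, ε i ^ m i) = (-1 : ℂ) ^ m j := by
        rw [Finset.prod_eq_single j (fun i _ hi => by simp [hεdef, hi]) (by simp)]
        simp [hεdef]
      rw [hprod, hodd.neg_one_pow, neg_one_mul] at this
      have : coeff m p = 0 := by linear_combination (-1/2 : ℂ) * this
      exact (mem_support_iff.mp hm) this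
    rw [p.as_sum]
    apply Subalgebra.sum_mem
    intro m hm
    rw [monomial_eq]
    apply Subalgebra.mul_mem
    · exact Subalgebra.algebraMap_mem _ _
    · apply Subalgebra.prod_mem
      intro i _
      obtain ⟨k, hk⟩ := heven m hm i
      have : m i = 2 * k := by omega
      rw [this]
      show (X i : MvPolynomial (Fin 6) ℂ) ^ (2 * k) ∈ _
      rw [pow_mul]
      exact pow_mem (Algebra.subset_adjoin (Set.mem_range_self i)) k
  · intro h ε hε
    induction h using Algebra.adjoin_induction with
    | mem x hx =>
      obtain ⟨i, rfl⟩ := hx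
      simp [smul_pow, hε i]
    | algebraMap r => simp
    | add x y hx hy ihx ihy => rw [map_add, ihx, ihy]
    | mul x y hx hy ihx ihy => rw [map_mul, ihx, ihy]
end

section
/- Let φ : MvPolynomial (Fin 6 ⊕ Unit) ℂ →ₐ[ℂ] MvPolynomial (Fin 6) ℂ be the ℂ-algebra homomorphism sending X (Sum.inl i) to X i ^ 2 for each i : Fin 6 and X (Sum.inr ()) to ∏ i, X i. Then the kernel of φ is the principal ideal generated by X (Sum.inr ()) ^ 2 − ∏ i, X (Sum.inl i). -/
open Finset MvPolynomial

noncomputable section KerAux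

/-- The squaring endomorphism `X i ↦ X i ^ 2`. -/
def gsq : MvPolynomial (Fin 6) ℂ →ₐ[ℂ] MvPolynomial (Fin 6) ℂ :=
  MvPolynomial.aeval (fun i => MvPolynomial.X i ^ 2)

lemma gsq_injective : Function.Injective gsq := by
  intro p q h
  apply MvPolynomial.funext
  intro x
  choose z hz using fun i => IsAlgClosed.exists_pow_nat_eq (x i) (n := 2) (by norm_num)
  have key : ∀ p : MvPolynomial (Fin 6) ℂ,
      MvPolynomial.eval x p = MvPolynomial.eval z (gsq p) := by
    intro p
    have hx : x = fun i => z i ^ 2 := by funext i; rw [hz]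
    subst hx
    induction p using MvPolynomial.induction_on with
    | C a => simp [gsq]
    | add p q hp hq => simp [hp, hq]
    | mul_X p i hp => simp [gsq, hp]
  rw [key p, key q, h]

/-- the sign-change automorphism on the 0th variable -/
def sgn : MvPolynomial (Fin 6) ℂ →ₐ[ℂ] MvPolynomial (Fin 6) ℂ :=
  MvPolynomial.aeval (fun i => if i = 0 then -MvPolynomial.X i else MvPolynomial.X i)

lemma sgn_gsq (p : MvPolynomial (Fin 6) ℂ) : sgn (gsq p) = gsq p := by
  induction p using MvPolynomial.induction_on with
  | C a => simp [gsq, sgn]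
  | add p q hp hq => simp [hp, hq]
  | mul_X p i hp =>
    rw [map_mul, map_mul, hp]
    refine congrArg (gsq p * ·) ?_
    by_cases hi : i = 0 <;> simp [gsq, sgn, hi]

lemma sgn_prod : sgn (∏ i : Fin 6, MvPolynomial.X i) = -∏ i : Fin 6, MvPolynomial.X i := by
  rw [map_prod]
  have : ∀ i : Fin 6, sgn (MvPolynomial.X i)
      = if i = 0 then -MvPolynomial.X i else MvPolynomial.X i := fun i => by simp [sgn]
  simp only [this]
  rw [Fin.prod_univ_six, Fin.prod_univ_six]
  norm_num [show (1:Fin 6) ≠ 0 by decide, show (2:Fin 6) ≠ 0 by decide,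
    show (3:Fin 6) ≠ 0 by decide, show (4:Fin 6) ≠ 0 by decide, show (5:Fin 6) ≠ 0 by decide]


/-- the identification of `ℂ[Y,T]` with `R[T]`, `R = ℂ[X₀,…,X₅]`. -/
def eqv : MvPolynomial (Fin 6 ⊕ Unit) ℂ ≃ₐ[ℂ] Polynomial (MvPolynomial (Fin 6) ℂ) :=
  (MvPolynomial.renameEquiv ℂ (Equiv.sumComm (Fin 6) Unit)).trans
    ((MvPolynomial.sumAlgEquiv ℂ Unit (Fin 6)).trans
      ((MvPolynomial.pUnitAlgEquiv (MvPolynomial (Fin 6) ℂ)).restrictScalars ℂ))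

lemma eqv_inl (i : Fin 6) :
    eqv (MvPolynomial.X (Sum.inl i)) = Polynomial.C (MvPolynomial.X i) := by
  simp [eqv, sumToIter_Xr]

lemma eqv_inr : eqv (MvPolynomial.X (Sum.inr ())) = Polynomial.X := by
  simp [eqv, sumToIter_Xl]


/-- evaluation `T ↦ ∏ Xᵢ` with coefficients mapped by `gsq`. -/
def psi : Polynomial (MvPolynomial (Fin 6) ℂ) →+* MvPolynomial (Fin 6) ℂ :=
  Polynomial.eval₂RingHom gsq.toRingHom (∏ i : Fin 6, MvPolynomial.X i)

end KerAux

/-- The `ℂ`-algebra homomorphism sending `X (Sum.inl i)` to `X i ^ 2` and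
`X (Sum.inr ())` to the product `∏ i, X i`. -/
noncomputable def invariantPresentation :
    MvPolynomial (Fin 6 ⊕ Unit) ℂ →ₐ[ℂ] MvPolynomial (Fin 6) ℂ :=
  MvPolynomial.aeval (Sum.elim
    (fun i : Fin 6 => (MvPolynomial.X i : MvPolynomial (Fin 6) ℂ) ^ 2)
    (fun _ : Unit => ∏ i : Fin 6, MvPolynomial.X i))

lemma psi_eqv (p : MvPolynomial (Fin 6 ⊕ Unit) ℂ) :
    psi (eqv p) = invariantPresentation p := by
  induction p using MvPolynomial.induction_on with
  | C a =>
    have : eqv (MvPolynomial.C a) = Polynomial.C (MvPolynomial.C a) := by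
      rw [show (MvPolynomial.C a : MvPolynomial (Fin 6 ⊕ Unit) ℂ)
          = algebraMap ℂ _ a from rfl, AlgEquiv.commutes]
      rfl
    simp [this, psi, invariantPresentation, gsq]
  | add p q hp hq => simp [map_add, hp, hq]
  | mul_X p s hp =>
    rw [map_mul, map_mul, hp]
    rcases s with i | u
    · rw [eqv_inl]; simp [psi, invariantPresentation, gsq]
    · rw [eqv_inr]; simp [psi, invariantPresentation]

theorem kernel_of_invariant_presentation :
    RingHom.ker invariantPresentation =
      Ideal.span {(MvPolynomial.X (Sum.inr ()) : MvPolynomial (Fin 6 ⊕ Unit) ℂ) ^ 2 -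
        ∏ i : Fin 6, MvPolynomial.X (Sum.inl i)} := by
  set c : MvPolynomial (Fin 6) ℂ := ∏ i : Fin 6, MvPolynomial.X i with hc
  set r : MvPolynomial (Fin 6 ⊕ Unit) ℂ :=
    MvPolynomial.X (Sum.inr ()) ^ 2 - ∏ i : Fin 6, MvPolynomial.X (Sum.inl i) with hr
  have hgc : gsq c = c ^ 2 := by
    rw [hc, map_prod, ← Finset.prod_pow]
    simp [gsq]
  have heqvr : eqv r = Polynomial.X ^ 2 - Polynomial.C c := by
    rw [hr, map_sub, map_pow, eqv_inr, map_prod]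
    congr 1
    rw [hc, map_prod]
    exact Finset.prod_congr rfl fun i _ => eqv_inl i
  apply le_antisymm
  · intro p hp
    rw [RingHom.mem_ker] at hp
    set m : Polynomial (MvPolynomial (Fin 6) ℂ) := Polynomial.X ^ 2 - Polynomial.C c with hm
    have hmon : m.Monic := Polynomial.monic_X_pow_sub_C c two_ne_zero
    set q := eqv p with hq
    have hpsim : psi m = 0 := by
      simp [psi, hm, hgc, ← hc]
    have hpsiq : psi q = 0 := by rw [hq, psi_eqv, hp]
    have hdiv := Polynomial.modByMonic_add_div q m
    have hpsirem : psi (q %ₘ m) = 0 := by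
      have := congrArg psi hdiv
      rw [map_add, map_mul, hpsim, zero_mul, add_zero, hpsiq] at this
      exact this
    have hdeg : (q %ₘ m).degree ≤ 1 := by
      have h2 : m.degree = 2 := Polynomial.degree_X_pow_sub_C (by norm_num) c
      have := Polynomial.degree_modByMonic_lt q hmon
      rw [h2] at this
      exact Order.le_of_lt_succ (by exact_mod_cast this)
    have hrep := Polynomial.eq_X_add_C_of_degree_le_one hdeg
    set s₁ := (q %ₘ m).coeff 1
    set s₀ := (q %ₘ m).coeff 0
    have heval : gsq s₁ * c + gsq s₀ = 0 := by
      have := hpsirem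
      rw [hrep] at this
      simpa [psi] using this
    have heval' : -(gsq s₁ * c) + gsq s₀ = 0 := by
      have := congrArg sgn heval
      rw [map_add, map_mul, sgn_gsq, sgn_gsq, map_zero, hc, sgn_prod, ← hc] at this
      rw [← this]; ring
    have hs0 : s₀ = 0 := by
      apply gsq_injective
      rw [map_zero]
      have h2g : (2 : MvPolynomial (Fin 6) ℂ) * gsq s₀ = 0 := by
        rw [show (0 : MvPolynomial (Fin 6) ℂ) = (gsq s₁ * c + gsq s₀) +
          (-(gsq s₁ * c) + gsq s₀) from by rw [heval, heval']; ring]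
        ring
      have h2 : (2 : MvPolynomial (Fin 6) ℂ) ≠ 0 := by norm_num
      exact (mul_eq_zero.mp h2g).resolve_left h2
    have hs1 : s₁ = 0 := by
      apply gsq_injective
      rw [map_zero]
      have hmul : gsq s₁ * c = 0 := by
        have := heval
        rw [hs0, map_zero, add_zero] at this
        exact this
      have hcne : c ≠ 0 := by
        rw [hc]
        exact Finset.prod_ne_zero_iff.mpr fun i _ => MvPolynomial.X_ne_zero i
      exact (mul_eq_zero.mp hmul).resolve_right hcne
    have hrem0 : q %ₘ m = 0 := by rw [hrep, hs0, hs1]; simp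
    have hqm : q = m * (q /ₘ m) := by nth_rewrite 1 [← hdiv]; rw [hrem0, zero_add]
    have hfin : p = r * eqv.symm (q /ₘ m) := by
      apply eqv.injective
      rw [map_mul, heqvr, AlgEquiv.apply_symm_apply, ← hq]; exact hqm
    rw [hfin]
    exact Ideal.mul_mem_right _ _ (Ideal.subset_span rfl)
  · rw [Ideal.span_le, Set.singleton_subset_iff, SetLike.mem_coe, RingHom.mem_ker]
    rw [hr, map_sub, map_pow, map_prod]
    simp only [invariantPresentation, MvPolynomial.aeval_X, Sum.elim_inl, Sum.elim_inr]
    rw [Finset.prod_pow]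
    ring
end

section
/- Every polynomial p ∈ MvPolynomial (Fin 6) ℂ that is fixed by the ℂ-algebra substitution X i ↦ ε i • X i for every even sign vector ε can be written uniquely as p = q + r * ∏ i, X i where q and r both lie in the ℂ-subalgebra generated by X 0 ^ 2, …, X 5 ^ 2. -/
open Finset MvPolynomial

noncomputable section

namespace EvenInvAux

abbrev P6 := MvPolynomial (Fin 6) ℂ

def A : Subalgebra ℂ P6 := Algebra.adjoin ℂ (Set.range fun i : Fin 6 => (X i : P6) ^ 2)

def S : Subalgebra ℂ P6 where
  carrier := {s | ∀ m ∈ s.support, ∀ i, Even (m i)}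
  mul_mem' := by
    intro a b ha hb m hm i
    have h := support_mul a b hm
    rw [Finset.mem_add] at h
    obtain ⟨x, hx, y, hy, rfl⟩ := h
    exact (ha x hx i).add (hb y hy i)
  add_mem' := by
    intro a b ha hb m hm i
    have h := Finsupp.support_add hm
    rw [Finset.mem_union] at h
    rcases h with h | h
    · exact ha m h i
    · exact hb m h i
  algebraMap_mem' := by
    intro c m hm i
    rw [mem_support_iff, algebraMap_eq, coeff_C] at hm
    split_ifs at hm with h
    · simp [← h]
    · simp at hm

lemma A_le_S : A ≤ S := by
  rw [A, Algebra.adjoin_le_iff]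
  rintro _ ⟨i, rfl⟩ m hm j
  simp only [X_pow_eq_monomial] at hm
  have h := support_monomial_subset hm
  simp only [Finset.mem_singleton] at h
  subst h
  rcases eq_or_ne i j with rfl | hij
  · simp [Finsupp.single_apply]
  · simp [Finsupp.single_apply, hij]

lemma monomial_mem_A (m : Fin 6 →₀ ℕ) (c : ℂ) (h : ∀ i, Even (m i)) :
    monomial m c ∈ A := by
  rw [monomial_eq]
  refine mul_mem (A.algebraMap_mem c) ?_
  rw [Finsupp.prod]
  refine Subalgebra.prod_mem _ fun i _ => ?_
  obtain ⟨k, hk⟩ := h i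
  have : m i = 2 * k := by omega
  rw [this, pow_mul]
  have hx : (X i : P6) ^ 2 ∈ A := Algebra.subset_adjoin ⟨i, rfl⟩
  exact pow_mem hx k

lemma coeff_scale (ε : Fin 6 → ℂ) (p : P6) (m : Fin 6 →₀ ℕ) :
    coeff m (aeval (fun i => ε i • (X i : P6)) p) = (∏ i, ε i ^ m i) * coeff m p := by
  induction p using MvPolynomial.induction_on generalizing m with
  | C a =>
    simp only [aeval_C, algebraMap_eq, coeff_C]
    split_ifs with h
    · subst h; simp
    · simp
  | add p q hp hq => simp only [map_add, coeff_add, hp, hq, mul_add]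
  | mul_X p i hp =>
    rw [map_mul, aeval_X, smul_eq_C_mul, ← mul_assoc, mul_comm _ (C (ε i)), mul_assoc,
      coeff_C_mul, coeff_mul_X', coeff_mul_X']
    split_ifs with h
    · rw [hp]
      set m' : Fin 6 →₀ ℕ := m - Finsupp.single i 1 with hm'
      have hle : Finsupp.single i 1 ≤ m := by
        rw [Finsupp.single_le_iff]
        simpa [Finsupp.mem_support_iff, Nat.one_le_iff_ne_zero] using h
      have hm : m = m' + Finsupp.single i 1 := (tsub_add_cancel_of_le hle).symm
      have hsng : (∏ j, ε j ^ (Finsupp.single i 1) j) = ε i := by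
        simp [Finsupp.single_apply, pow_ite, Finset.prod_ite_eq]
      have key : (∏ j, ε j ^ m j) = (∏ j, ε j ^ m' j) * ε i := by
        calc ∏ j, ε j ^ m j
            = ∏ j, (ε j ^ m' j * ε j ^ (Finsupp.single i 1) j) := by
              refine Finset.prod_congr rfl fun j _ => ?_
              conv_lhs => rw [hm]
              rw [Finsupp.add_apply, pow_add]
          _ = (∏ j, ε j ^ m' j) * ∏ j, ε j ^ (Finsupp.single i 1) j :=
              Finset.prod_mul_distrib
          _ = _ := by rw [hsng]
      rw [key]; ring
    · ring

lemma cancel (q r : P6) (hq : q ∈ S) (hr : r ∈ S) (u : Fin 6 →₀ ℕ) (hu : ∀ i, u i = 1)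
    (h : q + r * monomial u 1 = 0) : q = 0 ∧ r = 0 := by
  have hr0 : r = 0 := by
    by_contra hne
    obtain ⟨m, hm⟩ := ne_zero_iff.mp hne
    have h1 : coeff (m + u) q = 0 := by
      by_contra h2
      have he : Even ((m + u) 0) := hq (m + u) (mem_support_iff.mpr h2) 0
      have hm0 : Even (m 0) := hr m (mem_support_iff.mpr hm) 0
      rw [Finsupp.add_apply, hu 0] at he
      obtain ⟨a, ha⟩ := he; obtain ⟨b, hb⟩ := hm0; omega
    have h2 : coeff (m + u) (r * monomial u 1) = coeff m r * 1 :=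
      coeff_mul_monomial _ _ _ _
    have h3 := congrArg (coeff (m + u)) h
    rw [coeff_add, h1, coeff_zero, h2, zero_add, mul_one] at h3
    exact hm h3
  refine ⟨?_, hr0⟩
  rw [hr0, zero_mul, add_zero] at h; exact h

end EvenInvAux

open EvenInvAux in
theorem even_invariant_unique_decomposition (p : MvPolynomial (Fin 6) ℂ)
    (hp : ∀ ε : Fin 6 → ℂ, (∀ i, ε i ^ 2 = 1) →
        Even (Finset.univ.filter fun i => ε i = -1).card →
        MvPolynomial.aeval (fun i => ε i • (MvPolynomial.X i : MvPolynomial (Fin 6) ℂ)) p = p) :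
    ∃! qr : MvPolynomial (Fin 6) ℂ × MvPolynomial (Fin 6) ℂ,
      qr.1 ∈ Algebra.adjoin ℂ
          (Set.range fun i : Fin 6 => (MvPolynomial.X i : MvPolynomial (Fin 6) ℂ) ^ 2) ∧
      qr.2 ∈ Algebra.adjoin ℂ
          (Set.range fun i : Fin 6 => (MvPolynomial.X i : MvPolynomial (Fin 6) ℂ) ^ 2) ∧
      p = qr.1 + qr.2 * ∏ i : Fin 6, MvPolynomial.X i := by
  classical
  -- parity of exponents from invariance
  have hinv : ∀ m ∈ p.support, ∀ i j : Fin 6, i ≠ j → Even (m i + m j) := by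
    intro m hm i j hij
    set ε : Fin 6 → ℂ := fun k => if i = k then -1 else if j = k then -1 else 1 with hε
    have h1 : ∀ k, ε k ^ 2 = 1 := by
      intro k; simp only [hε]; split_ifs <;> norm_num
    have h2 : (univ.filter fun k => ε k = -1) = {i, j} := by
      ext k
      simp only [mem_filter, mem_univ, true_and, mem_insert, mem_singleton, hε]
      split_ifs with h h'
      · simp [h.symm]
      · simp [h'.symm]
      · constructor
        · intro hc; norm_num at hc
        · rintro (rfl | rfl) <;> simp_all
    have h3 : Even (univ.filter fun k => ε k = -1).card := by
      rw [h2, Finset.card_insert_of_notMem (by simp [hij]), Finset.card_singleton]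
      exact even_two
    have h4 := hp ε h1 h3
    have h5 := congrArg (coeff m) h4
    rw [coeff_scale] at h5
    have h6 : (∏ k, ε k ^ m k) = 1 :=
      mul_right_cancel₀ (mem_support_iff.mp hm) (h5.trans (one_mul _).symm)
    have h7 : (∏ k, ε k ^ m k) = (-1 : ℂ) ^ (m i + m j) := by
      have hk : ∀ k, ε k ^ m k
          = (if i = k then (-1 : ℂ) ^ m k else 1) * (if j = k then (-1 : ℂ) ^ m k else 1) := by
        intro k
        simp only [hε]
        split_ifs with h h'
        · exact absurd (h.trans h'.symm) hij
        · ring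
        · ring
        · ring
      rw [Finset.prod_congr rfl (fun k _ => hk k), Finset.prod_mul_distrib,
        Finset.prod_ite_eq, Finset.prod_ite_eq]
      simp [pow_add]
    rw [h7, neg_one_pow_eq_one_iff_even (by norm_num : (-1 : ℂ) ≠ 1)] at h6
    exact h6
  have hcls : ∀ m ∈ p.support, (∀ i, Even (m i)) ∨ (∀ i, Odd (m i)) := by
    intro m hm
    by_cases h0 : Even (m 0)
    · left; intro i
      rcases eq_or_ne i 0 with rfl | hi
      · exact h0
      · exact (Nat.even_add.mp (hinv m hm i 0 hi)).mpr h0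
    · right; intro i
      rcases eq_or_ne i 0 with rfl | hi
      · exact Nat.not_even_iff_odd.mp h0
      · exact Nat.not_even_iff_odd.mp fun he =>
          h0 ((Nat.even_add.mp (hinv m hm i 0 hi)).mp he)
  -- the all-ones exponent
  set u : Fin 6 →₀ ℕ := Finsupp.equivFunOnFinite.symm fun _ => 1 with hudef
  have hui : ∀ i, u i = 1 := fun i => rfl
  have hprod : (∏ i : Fin 6, (X i : MvPolynomial (Fin 6) ℂ)) = monomial u 1 := by
    have hsupp : u.support = univ := by
      ext i; simp [Finsupp.mem_support_iff, hui]
    rw [monic_monomial_eq, Finsupp.prod, hsupp]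
    exact (Finset.prod_congr rfl fun i _ => by rw [hui i, pow_one]).symm
  set E := p.support.filter (fun m => ∀ i, Even (m i)) with hE
  set O := p.support.filter (fun m => ¬ ∀ i, Even (m i)) with hO
  have hOodd : ∀ m ∈ O, ∀ i, Odd (m i) := by
    intro m hm
    obtain ⟨hm1, hm2⟩ := mem_filter.mp hm
    rcases hcls m hm1 with h | h
    · exact absurd h hm2
    · exact h
  have hOle : ∀ m ∈ O, u ≤ m := by
    intro m hm
    intro i
    rw [hui i]
    exact (hOodd m hm i).pos
  have hqA : (∑ m ∈ E, monomial m (coeff m p)) ∈ A :=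
    Subalgebra.sum_mem _ fun m hm => monomial_mem_A m _ (mem_filter.mp hm).2
  have hrA : (∑ m ∈ O, monomial (m - u) (coeff m p)) ∈ A := by
    refine Subalgebra.sum_mem _ fun m hm => monomial_mem_A _ _ fun i => ?_
    rw [Finsupp.tsub_apply, hui i]
    exact Nat.Odd.sub_odd (hOodd m hm i) odd_one
  have hsum : p = (∑ m ∈ E, monomial m (coeff m p))
      + (∑ m ∈ O, monomial (m - u) (coeff m p)) * monomial u 1 := by
    conv_lhs => rw [p.as_sum]
    rw [← Finset.sum_filter_add_sum_filter_not p.support (fun m => ∀ i, Even (m i)), ← hE, ← hO]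
    congr 1
    rw [Finset.sum_mul]
    refine Finset.sum_congr rfl fun m hm => ?_
    rw [monomial_mul, mul_one, tsub_add_cancel_of_le (hOle m hm)]
  refine ⟨(∑ m ∈ E, monomial m (coeff m p), ∑ m ∈ O, monomial (m - u) (coeff m p)),
    ⟨hqA, hrA, by rw [hprod]; exact hsum⟩, ?_⟩
  rintro ⟨q', r'⟩ ⟨hq', hr', heq⟩
  rw [hprod] at heq
  have hz : (q' - ∑ m ∈ E, monomial m (coeff m p))
      + (r' - ∑ m ∈ O, monomial (m - u) (coeff m p)) * monomial u 1 = 0 := by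
    rw [sub_mul]
    have := heq.symm.trans hsum
    linear_combination this
  obtain ⟨hz1, hz2⟩ := cancel _ _
    (sub_mem (A_le_S hq') (A_le_S hqA)) (sub_mem (A_le_S hr') (A_le_S hrA)) u hui hz
  have e1 : q' = ∑ m ∈ E, monomial m (coeff m p) := by linear_combination hz1
  have e2 : r' = ∑ m ∈ O, monomial (m - u) (coeff m p) := by linear_combination hz2
  simp only [Prod.mk.injEq]
  exact ⟨e1, e2⟩
end
end

section
/- Let x, x' : Fin 6 → ℂ satisfy (x' i)^2 = (x i)^2 for all i and ∏ i, x' i = ∏ i, x i. Then there exists a sign vector ε : Fin 6 → ℂ (ε i ^ 2 = 1 for all i) such that the number of indices i with ε i = −1 is even and x' i = ε i * x i for all i. -/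
open Finset

theorem same_invariants_implies_same_orbit (x x' : Fin 6 → ℂ)
    (h1 : ∀ i, x' i ^ 2 = x i ^ 2) (h2 : ∏ i, x' i = ∏ i, x i) :
    ∃ ε : Fin 6 → ℂ, (∀ i, ε i ^ 2 = 1) ∧
      Even (Finset.univ.filter fun i => ε i = -1).card ∧ ∀ i, x' i = ε i * x i := by
  classical
  set ε : Fin 6 → ℂ := fun i => if x i = 0 then 1 else x' i / x i with hε
  have hzero : ∀ i, x i = 0 → x' i = 0 := by
    intro i hi
    have := h1 i
    rw [hi] at this
    simpa [pow_eq_zero_iff] using this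
  have hsq : ∀ i, ε i ^ 2 = 1 := by
    intro i
    simp only [hε]
    split
    · simp
    · rename_i h
      rw [div_pow, h1 i, div_self (pow_ne_zero _ h)]
  have hone : ∀ i, ε i = 1 ∨ ε i = -1 := by
    intro i
    have := hsq i
    rw [sq] at this
    exact mul_self_eq_one_iff.mp this
  have hx : ∀ i, x' i = ε i * x i := by
    intro i
    simp only [hε]
    split
    · rename_i h; rw [hzero i h, h, mul_zero]
    · rename_i h; rw [div_mul_cancel₀ _ h]
  by_cases hz : ∃ j, x j = 0
  · obtain ⟨j, hj⟩ := hz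
    have hεj : ε j = 1 := by simp [hε, hj]
    by_cases he : Even (Finset.univ.filter fun i => ε i = -1).card
    · exact ⟨ε, hsq, he, hx⟩
    · refine ⟨Function.update ε j (-1), ?_, ?_, ?_⟩
      · intro i
        rcases eq_or_ne i j with rfl | h
        · simp
        · rw [Function.update_of_ne h]; exact hsq i
      · have hset : (Finset.univ.filter fun i => Function.update ε j (-1) i = -1)
            = insert j (Finset.univ.filter fun i => ε i = -1) := by
          ext i
          rcases eq_or_ne i j with rfl | h
          · simp
          · simp [Function.update_of_ne h, h]
        rw [hset, Finset.card_insert_of_notMem (by simp [hεj]; norm_num)]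
        exact (Nat.not_even_iff_odd.mp he).add_one
      · intro i
        rcases eq_or_ne i j with rfl | h
        · simp [Function.update_self, hzero i hj, hj]
        · rw [Function.update_of_ne h]; exact hx i
  · push_neg at hz
    refine ⟨ε, hsq, ?_, hx⟩
    have hprod : ∏ i, ε i = 1 := by
      have : ∏ i, ε i = (∏ i, x' i) / ∏ i, x i := by
        rw [← Finset.prod_div_distrib]
        exact Finset.prod_congr rfl fun i _ => by simp [hε, hz i]
      rw [this, h2, div_self (Finset.prod_ne_zero_iff.mpr fun i _ => hz i)]
    have hsplit := Finset.prod_filter_mul_prod_filter_not Finset.univ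
      (fun i => ε i = -1) ε
    rw [Finset.prod_eq_pow_card (fun i hi => (Finset.mem_filter.mp hi).2),
      Finset.prod_eq_one (fun i hi => by
        rcases hone i with h | h
        · exact h
        · exact absurd h (by simpa using (Finset.mem_filter.mp hi).2)),
      mul_one, hprod] at hsplit
    exact (neg_one_pow_eq_one_iff_even (by norm_num : (-1 : ℂ) ≠ 1)).mp hsplit
end

section
/- Let M : Matrix (Fin 3) (Fin 6) ℂ be a matrix such that for every injective map c : Fin 3 → Fin 6 the 3×3 submatrix with columns c has nonzero determinant. Then the set of 1-dimensional subspaces ℓ of (Fin 6 → ℂ) such that every y ∈ ℓ satisfies M.mulVec y = 0 and such that some nonzero y ∈ ℓ has y i = 0 and y j = 0 for two distinct indices i, j, has exactly 15 elements. -/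
open Matrix Submodule Module

lemma factA (M : Matrix (Fin 3) (Fin 6) ℂ)
    (hM : ∀ c : Fin 3 → Fin 6, Function.Injective c → (M.submatrix id c).det ≠ 0)
    (y : Fin 6 → ℂ) (hy : M.mulVec y = 0)
    (s : Finset (Fin 6)) (hs : 3 ≤ s.card) (hz : ∀ i ∈ s, y i = 0) : y = 0 := by
  obtain ⟨t, hts, ht⟩ := Finset.exists_subset_card_eq hs
  have hcompl : tᶜ.card = 3 := by
    have := Finset.card_compl t
    simp only [Fintype.card_fin, ht] at this
    omega
  let e : Fin 3 ≃ {x // x ∈ tᶜ} := (tᶜ.equivFin.trans (finCongr hcompl)).symm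
  set c : Fin 3 → Fin 6 := fun r => (e r : Fin 6) with hc
  have hcinj : Function.Injective c := fun a b hab => e.injective (Subtype.ext hab)
  have key : (M.submatrix id c).mulVec (y ∘ c) = 0 := by
    funext r
    have h1 : (M.submatrix id c).mulVec (y ∘ c) r
        = ∑ x : {x // x ∈ tᶜ}, M r (x : Fin 6) * y (x : Fin 6) := by
      rw [Matrix.mulVec, dotProduct]
      exact Fintype.sum_equiv e (fun i => M.submatrix id c r i * (y ∘ c) i) (fun x => M r (x:Fin 6) * y (x:Fin 6)) (fun i => rfl)
    have h2 : ∑ x : {x // x ∈ tᶜ}, M r (x : Fin 6) * y (x : Fin 6)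
        = ∑ l ∈ tᶜ, M r l * y l := Finset.sum_coe_sort tᶜ (fun l => M r l * y l)
    have h3 : ∑ l ∈ tᶜ, M r l * y l = ∑ l, M r l * y l := by
      refine Finset.sum_subset (Finset.subset_univ _) ?_
      intro l _ hl
      rw [hz l (hts (by simpa using hl)), mul_zero]
    have h4 : ∑ l, M r l * y l = M.mulVec y r := rfl
    rw [h1, h2, h3, h4, hy]
  have hyc : y ∘ c = 0 := Matrix.eq_zero_of_mulVec_eq_zero (hM c hcinj) key
  funext l
  by_cases hl : l ∈ t
  · exact hz l (hts hl)
  · obtain ⟨r, hr⟩ := e.surjective ⟨l, by simpa using hl⟩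
    have := congrFun hyc r
    simpa [hc, hr] using this

lemma factB (M : Matrix (Fin 3) (Fin 6) ℂ) (i j : Fin 6) :
    ∃ y : Fin 6 → ℂ, y ≠ 0 ∧ M.mulVec y = 0 ∧ y i = 0 ∧ y j = 0 := by
  let F : (Fin 6 → ℂ) →ₗ[ℂ] (Fin 3 → ℂ) × ℂ × ℂ :=
    LinearMap.prod M.mulVecLin
      (LinearMap.prod (LinearMap.proj i) (LinearMap.proj j))
  have hker : LinearMap.ker F ≠ ⊥ := by
    intro h
    have hinj : Function.Injective F := LinearMap.ker_eq_bot.mp h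
    have hle := LinearMap.finrank_le_finrank_of_injective hinj
    simp [Module.finrank_prod, Module.finrank_pi] at hle
  obtain ⟨y, hy, hy0⟩ := Submodule.exists_mem_ne_zero_of_ne_bot hker
  rw [LinearMap.mem_ker] at hy
  have h1 : M.mulVec y = 0 := congrArg Prod.fst hy
  have h2 : y i = 0 := congrArg (Prod.fst ∘ Prod.snd) hy
  have h3 : y j = 0 := congrArg (Prod.snd ∘ Prod.snd) hy
  exact ⟨y, hy0, h1, h2, h3⟩

lemma factC (M : Matrix (Fin 3) (Fin 6) ℂ)
    (hM : ∀ c : Fin 3 → Fin 6, Function.Injective c → (M.submatrix id c).det ≠ 0)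
    (i j : Fin 6) (hij : i ≠ j) (u v : Fin 6 → ℂ)
    (hu : M.mulVec u = 0) (hui : u i = 0) (huj : u j = 0) (hu0 : u ≠ 0)
    (hv : M.mulVec v = 0) (hvi : v i = 0) (hvj : v j = 0) :
    ∃ a : ℂ, v = a • u := by
  obtain ⟨k, hk⟩ : ∃ k : Fin 6, k ∉ ({i, j} : Finset (Fin 6)) := by
    by_contra h
    push_neg at h
    have h2 : (Finset.univ : Finset (Fin 6)).card ≤ ({i, j} : Finset (Fin 6)).card :=
      Finset.card_le_card fun x _ => h x
    rw [Finset.card_pair hij] at h2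
    simp at h2
  simp only [Finset.mem_insert, Finset.mem_singleton, not_or] at hk
  obtain ⟨hki, hkj⟩ := hk
  have hcard : ({i, j, k} : Finset (Fin 6)).card = 3 := by
    rw [Finset.card_insert_of_notMem (by simp [hij, Ne.symm hki]),
        Finset.card_pair (Ne.symm hkj)]
  have huk : u k ≠ 0 := by
    intro h
    refine hu0 (factA M hM u hu {i, j, k} (le_of_eq hcard.symm) ?_)
    intro l hl
    simp only [Finset.mem_insert, Finset.mem_singleton] at hl
    rcases hl with rfl | rfl | rfl <;> assumption
  set w : Fin 6 → ℂ := u k • v - v k • u with hw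
  have hwker : M.mulVec w = 0 := by
    rw [hw, Matrix.mulVec_sub, Matrix.mulVec_smul, Matrix.mulVec_smul, hu, hv]
    simp
  have hwzero : w = 0 := by
    refine factA M hM w hwker {i, j, k} (le_of_eq hcard.symm) ?_
    intro l hl
    simp only [Finset.mem_insert, Finset.mem_singleton] at hl
    rcases hl with rfl | rfl | rfl <;>
      simp [hw, hui, huj, hvi, hvj, mul_comm]
  have heq : u k • v = v k • u := sub_eq_zero.mp hwzero
  refine ⟨v k / u k, ?_⟩
  funext l
  have := congrFun heq l
  simp only [Pi.smul_apply, smul_eq_mul] at this ⊢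
  field_simp
  linear_combination this

theorem fifteen_intersection_points
    (M : Matrix (Fin 3) (Fin 6) ℂ)
    (hM : ∀ c : Fin 3 → Fin 6, Function.Injective c → (M.submatrix id c).det ≠ 0) :
    Set.ncard {ℓ : Submodule ℂ (Fin 6 → ℂ) |
      Module.finrank ℂ ↥ℓ = 1 ∧
      (∀ y ∈ ℓ, M.mulVec y = 0) ∧
      ∃ y ∈ ℓ, y ≠ 0 ∧ ∃ i j : Fin 6, i ≠ j ∧ y i = 0 ∧ y j = 0} = 15 := by
  classical
  set g : Finset (Fin 6) → Submodule ℂ (Fin 6 → ℂ) :=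
    fun s => LinearMap.ker M.mulVecLin ⊓
      ⨅ i ∈ s, LinearMap.ker (LinearMap.proj i : (Fin 6 → ℂ) →ₗ[ℂ] ℂ) with hg
  have hmem : ∀ (s : Finset (Fin 6)) (y : Fin 6 → ℂ),
      y ∈ g s ↔ M.mulVec y = 0 ∧ ∀ i ∈ s, y i = 0 := by
    intro s y
    simp [hg, Submodule.mem_inf, Submodule.mem_iInf, LinearMap.mem_ker,
      Matrix.mulVecLin_apply]
  have hspan : ∀ i j : Fin 6, i ≠ j → ∀ u : Fin 6 → ℂ, u ≠ 0 → M.mulVec u = 0 →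
      u i = 0 → u j = 0 → g {i, j} = Submodule.span ℂ {u} := by
    intro i j hij u hu0 hu hui huj
    apply le_antisymm
    · intro v hv
      rw [hmem] at hv
      obtain ⟨hvk, hvz⟩ := hv
      obtain ⟨a, ha⟩ := factC M hM i j hij u v hu hui huj hu0 hvk
        (hvz i (by simp)) (hvz j (by simp))
      rw [ha]
      exact Submodule.smul_mem _ a (Submodule.mem_span_singleton_self u)
    · rw [Submodule.span_singleton_le_iff_mem, hmem]
      refine ⟨hu, ?_⟩
      intro l hl
      simp only [Finset.mem_insert, Finset.mem_singleton] at hl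
      rcases hl with rfl | rfl <;> assumption
  set T : Set (Finset (Fin 6)) := {s | s.card = 2} with hT
  have hS : {ℓ : Submodule ℂ (Fin 6 → ℂ) |
      Module.finrank ℂ ↥ℓ = 1 ∧
      (∀ y ∈ ℓ, M.mulVec y = 0) ∧
      ∃ y ∈ ℓ, y ≠ 0 ∧ ∃ i j : Fin 6, i ≠ j ∧ y i = 0 ∧ y j = 0} = g '' T := by
    ext ℓ
    constructor
    · rintro ⟨hrank, hker, y, hyℓ, hy0, i, j, hij, hyi, hyj⟩
      refine ⟨{i, j}, Finset.card_pair hij, ?_⟩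
      have hyk : M.mulVec y = 0 := hker y hyℓ
      rw [hspan i j hij y hy0 hyk hyi hyj]
      have hle : Submodule.span ℂ {y} ≤ ℓ := by
        rw [Submodule.span_singleton_le_iff_mem]; exact hyℓ
      exact Submodule.eq_of_le_of_finrank_eq hle
        (by rw [finrank_span_singleton hy0, hrank])
    · rintro ⟨s, hs, rfl⟩
      obtain ⟨i, j, hij, rfl⟩ := Finset.card_eq_two.mp hs
      obtain ⟨u, hu0, hu, hui, huj⟩ := factB M i j
      have hu_mem : u ∈ g {i, j} := by
        rw [hmem]
        refine ⟨hu, ?_⟩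
        intro l hl
        simp only [Finset.mem_insert, Finset.mem_singleton] at hl
        rcases hl with rfl | rfl <;> assumption
      refine ⟨?_, ?_, u, hu_mem, hu0, i, j, hij, hui, huj⟩
      · rw [hspan i j hij u hu0 hu hui huj]
        exact finrank_span_singleton hu0
      · intro y hy
        exact ((hmem _ y).mp hy).1
  have hinj : Set.InjOn g T := by
    intro s hs t ht hst
    by_contra hne
    obtain ⟨i, j, hij, rfl⟩ := Finset.card_eq_two.mp hs
    obtain ⟨u, hu0, hu, hui, huj⟩ := factB M i j
    have hu_mem : u ∈ g {i, j} := by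
      rw [hmem]
      refine ⟨hu, ?_⟩
      intro l hl
      simp only [Finset.mem_insert, Finset.mem_singleton] at hl
      rcases hl with rfl | rfl <;> assumption
    have hu_mem' : u ∈ g t := hst ▸ hu_mem
    rw [hmem] at hu_mem hu_mem'
    have hinter : (({i, j} : Finset (Fin 6)) ∩ t).card ≤ 1 := by
      by_contra h
      push_neg at h
      have h1 : ({i, j} : Finset (Fin 6)) ∩ t = {i, j} :=
        Finset.eq_of_subset_of_card_le Finset.inter_subset_left (by rw [Finset.card_pair hij]; omega)
      have h2 : ({i, j} : Finset (Fin 6)) ∩ t = t := by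
        apply Finset.eq_of_subset_of_card_le Finset.inter_subset_right
        rw [hT] at ht
        simp only [Set.mem_setOf_eq] at ht
        omega
      exact hne (h1 ▸ h2)
    have hcard : 3 ≤ (({i, j} : Finset (Fin 6)) ∪ t).card := by
      have := Finset.card_union_add_card_inter ({i, j} : Finset (Fin 6)) t
      rw [hT] at ht
      simp only [Set.mem_setOf_eq] at ht
      rw [Finset.card_pair hij, ht] at this
      omega
    refine hu0 (factA M hM u hu _ hcard ?_)
    intro l hl
    rw [Finset.mem_union] at hl
    rcases hl with hl | hl
    · exact hu_mem.2 l hl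
    · exact hu_mem'.2 l hl
  rw [hS, Set.ncard_image_of_injOn hinj]
  have : T = ↑(Finset.powersetCard 2 (Finset.univ : Finset (Fin 6))) := by
    ext s
    simp [hT, Finset.mem_powersetCard_univ]
  rw [this, Set.ncard_coe_finset, Finset.card_powersetCard]
  decide
end
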